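/- Assume p = 2, d = d2 > d1 > 1, and j2 = 0 (equivalently f2(X,Y) = Σ_{0<i≤d2} b_{i,0} X^i depends only on X). If d2 + 1 > 2·d1, then S_{f1,f2} contains an absolutely irreducible component defined over 𝔽_q. -/

import Mathlib

/-!
Substituting `X₂ = T + X₄` turns `F` into the quadratic `X₀^{d-1} T² + B T + c` in `T` over the
polynomial ring in `X₀, X₁, X₃, X₄`. The coefficient `B` only involves the `a i`, so it is
divisible by `X₀^{d-d₁}`, and `2 d₁ < d + 1` makes this more than half of `d - 1`. In a
factorisation `(α T + β)(γ T + δ)` we have `αγ = X₀^{d-1}`, and the two summands `αδ`, `βγ` of `B`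
then have the same `X₀`-adic valuation and cancel to first order, which forces `c ≡ -β'²`
modulo `X₀` for some `β'`. But modulo `X₀` the constant term is
`c ≡ b_{d,0} (X₁ - X₃)(X₁^d - X₃^d)`, whose derivative in `X₃` is nonzero, while in
characteristic `2` every square has zero derivative. Everything works over any field of
characteristic `2`, in particular over the algebraic closure.
-/

open MvPolynomial Finset

/-- The homogeneous polynomial `F` defining the hypersurface `S_{f1,f2}` for
`f1(X,Y) = Y + ∑ a_i X^i` and `f2(X,Y) = ∑ b_{i,j} X^i Y^j`, with
`d = max (deg f1) (deg f2)`. -/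
noncomputable def SpolySpec {F : Type} [Field F] (a : ℕ → F) (b : ℕ → ℕ → F) (d : ℕ) :
    MvPolynomial (Fin 5) F :=
  (X 2 - X 4) ^ 2 * X 0 ^ (d - 1)
  - (X 2 - X 4) * (∑ i ∈ Finset.range (d + 1), C (a i) * (X 3 ^ i - X 1 ^ i) * X 0 ^ (d - i))
  - (X 1 - X 3) * (∑ i ∈ Finset.range (d + 1), ∑ j ∈ Finset.range (d + 1),
      C (b i j) * (X 3 ^ i * X 4 ^ j - X 1 ^ i * X 2 ^ j) * X 0 ^ (d - i - j))

/-- `P` has a nonconstant divisor over `F` that stays irreducible over the algebraic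
closure, i.e. the hypersurface `P = 0` contains an absolutely irreducible component
defined over `F`. -/
def HasAbsIrredComp {F : Type} [Field F] (P : MvPolynomial (Fin 5) F) : Prop :=
  ∃ g : MvPolynomial (Fin 5) F, g ∣ P ∧ g.totalDegree ≠ 0 ∧
    Irreducible (MvPolynomial.map (algebraMap F (AlgebraicClosure F)) g)

section QuadraticCriterion

variable {R : Type*} [CommRing R] [IsDomain R] {π : R}

theorem eq_and_dvd_add_of_pow_succ_dvd (hπ : π ≠ 0) {a b : R} (ha : ¬ π ∣ a) {i k : ℕ}
    (hik : i ≤ k) (h : π ^ (i + 1) ∣ π ^ i * a + π ^ k * b) : i = k ∧ π ∣ a + b := by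
  have hcancel : ∀ x, π ^ (i + 1) ∣ π ^ i * x → π ∣ x := fun x hx =>
    (mul_dvd_mul_iff_left (pow_ne_zero i hπ)).mp (by rwa [← pow_succ])
  rcases hik.eq_or_lt with rfl | hlt
  · exact ⟨rfl, hcancel _ (by rwa [mul_add])⟩
  · exact absurd (hcancel a ((dvd_add_left ((pow_dvd_pow π hlt).mul_right b)).mp h)) ha

theorem Prime.exists_dvd_mul_add_sq_of_mul_eq_pow (hπ : Prime π) {n m : ℕ} (hnm : n < 2 * m)
    {α β γ δ : R} (hαγ : α * γ = π ^ n) (hB : π ^ m ∣ α * δ + β * γ) (hβδ : ¬ π ∣ β * δ) :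
    ∃ A, π ∣ β * δ + A ^ 2 := by
  obtain ⟨i, hi, u, hu⟩ := (dvd_prime_pow hπ n).mp (Dvd.intro γ hαγ)
  have hα : α = π ^ i * ↑u⁻¹ := by rw [← hu, mul_assoc, Units.mul_inv, mul_one]
  have hγ : γ = u * π ^ (n - i) := by
    refine mul_left_cancel₀ (left_ne_zero_of_mul (hαγ ▸ pow_ne_zero n hπ.ne_zero)) ?_
    rw [hαγ, ← mul_assoc, hu, ← pow_add, Nat.add_sub_cancel' hi]
  set a := ↑u⁻¹ * δ
  set b := ↑u * β
  have hba : b * a = β * δ := by rw [mul_mul_mul_comm, Units.mul_inv, one_mul]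
  have ha : ¬ π ∣ a := fun h => hβδ (hba ▸ h.mul_left b)
  have hb : ¬ π ∣ b := fun h => hβδ (hba ▸ h.mul_right a)
  have hsum : π ^ m ∣ π ^ i * a + π ^ (n - i) * b := by
    convert hB using 1; rw [hα, hγ]; ring
  have hab : π ∣ a + b := by
    rcases le_total i (n - i) with hle | hle
    · exact (eq_and_dvd_add_of_pow_succ_dvd hπ.ne_zero ha hle
        ((pow_dvd_pow π (by omega)).trans hsum)).2
    · rw [add_comm] at hsum ⊢
      exact (eq_and_dvd_add_of_pow_succ_dvd hπ.ne_zero hb hle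
        ((pow_dvd_pow π (by omega)).trans hsum)).2
  exact ⟨b, by rw [← hba, sq, ← mul_add]; exact hab.mul_left b⟩

theorem Prime.irreducible_quadratic (hπ : Prime π) {n m : ℕ} (hnm : n < 2 * m) {B c : R}
    (hB : π ^ m ∣ B) (hc : ∀ A, ¬ π ∣ c + A ^ 2) :
    Irreducible (Polynomial.C (π ^ n) * Polynomial.X ^ 2 + Polynomial.C B * Polynomial.X
      + Polynomial.C c) := by
  set Q := Polynomial.C (π ^ n) * Polynomial.X ^ 2 + Polynomial.C B * Polynomial.X
    + Polynomial.C c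
  have hc0 : ¬ π ∣ c := by simpa using hc 0
  have hQdeg : Q.natDegree = 2 := Polynomial.natDegree_quadratic (pow_ne_zero n hπ.ne_zero)
  have hQ0 : Q ≠ 0 := fun h => by simp [h] at hQdeg
  have hconst : ∀ f, f ∣ Q → f.natDegree = 0 → IsUnit f := by
    intro f hf hdeg
    rw [Polynomial.eq_C_of_natDegree_eq_zero hdeg, Polynomial.C_dvd_iff_dvd_coeff] at hf
    rw [Polynomial.eq_C_of_natDegree_eq_zero hdeg, Polynomial.isUnit_C]
    obtain ⟨j, -, hj⟩ := (dvd_prime_pow hπ n).mp (by simpa [Q, -map_pow] using hf 2)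
    rcases j.eq_zero_or_pos with rfl | hj0
    · simpa using hj
    · exact absurd (((dvd_pow_self π hj0.ne').trans hj.symm.dvd).trans
        (by simpa [Q, -map_pow] using hf 0)) hc0
  refine ⟨fun hu => by simpa [hQdeg] using Polynomial.natDegree_eq_zero_of_isUnit hu,
    fun g h hgh => ?_⟩
  have hdeg : g.natDegree + h.natDegree = 2 := by
    rw [← Polynomial.natDegree_mul (left_ne_zero_of_mul (hgh ▸ hQ0))
      (right_ne_zero_of_mul (hgh ▸ hQ0)), ← hgh, hQdeg]
  by_cases hg : g.natDegree = 0
  · exact Or.inl (hconst g (hgh ▸ dvd_mul_right g h) hg)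
  by_cases hh : h.natDegree = 0
  · exact Or.inr (hconst h (hgh ▸ dvd_mul_left h g) hh)
  exfalso
  rw [Polynomial.eq_X_add_C_of_natDegree_le_one (by omega : g.natDegree ≤ 1),
    Polynomial.eq_X_add_C_of_natDegree_le_one (by omega : h.natDegree ≤ 1)] at hgh
  set α := g.coeff 1; set β := g.coeff 0; set γ := h.coeff 1; set δ := h.coeff 0
  have hcoeff : ∀ k, Q.coeff k = (Polynomial.C (α * γ) * Polynomial.X ^ 2
      + Polynomial.C (α * δ + β * γ) * Polynomial.X + Polynomial.C (β * δ)).coeff k := by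
    intro k; rw [hgh]; congr 1; simp only [map_mul, map_add]; ring
  have h2 := hcoeff 2
  have h1 := hcoeff 1
  have h0 := hcoeff 0
  simp only [Q, Polynomial.coeff_add, Polynomial.coeff_C_mul, Polynomial.coeff_X_pow,
    Polynomial.coeff_X, Polynomial.coeff_C] at h2 h1 h0
  norm_num at h2 h1 h0
  obtain ⟨A, hA⟩ := hπ.exists_dvd_mul_add_sq_of_mul_eq_pow hnm h2.symm (h1 ▸ hB) (h0 ▸ hc0)
  exact hc A (h0 ▸ hA)

end QuadraticCriterion

theorem MvPolynomial.not_X_dvd_add_sq {σ K : Type*} [CommRing K] [CharP K 2] [DecidableEq σ]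
    {k j : σ} {c : MvPolynomial σ K}
    (hc : pderiv j (aeval (Function.update (X : σ → MvPolynomial σ K) k 0) c) ≠ 0)
    (A : MvPolynomial σ K) :
    ¬ X k ∣ c + A ^ 2 := by
  rintro ⟨t, ht⟩
  set φ : MvPolynomial σ K →ₐ[K] MvPolynomial σ K := aeval (Function.update X k 0)
  have hφ : φ c + φ A ^ 2 = 0 := by
    rw [← map_pow, ← map_add, ht, map_mul]; simp [φ]
  have hsq : pderiv j (φ A ^ 2) = 0 := by
    rw [pderiv_pow, show ((2 : ℕ) : MvPolynomial σ K) = 0 from CharP.cast_eq_zero _ 2,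
      zero_mul, zero_mul]
  exact hc (by simpa [hsq] using congrArg (pderiv j) hφ)

noncomputable def shearSwap (K : Type*) [CommRing K] :
    MvPolynomial (Fin 5) K ≃ₐ[K] MvPolynomial (Fin 5) K :=
  AlgEquiv.ofAlgHom
    (aeval (fun i : Fin 5 => if i = 0 then X 2 else if i = 2 then X 0 + X 4 else X i))
    (aeval (fun i : Fin 5 => if i = 0 then X 2 - X 4 else if i = 2 then X 0 else X i))
    (by apply algHom_ext; intro i; fin_cases i <;> simp)
    (by apply algHom_ext; intro i; fin_cases i <;> simp)

noncomputable def quadraticCoords (K : Type*) [CommRing K] :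
    MvPolynomial (Fin 5) K ≃ₐ[K] Polynomial (MvPolynomial (Fin 4) K) :=
  (shearSwap K).trans (finSuccEquiv K 4)

theorem quadraticCoords_X {K : Type*} [CommRing K] (i : Fin 5) :
    quadraticCoords K (X i) = ![Polynomial.C (X 1), Polynomial.C (X 0),
      Polynomial.X + Polynomial.C (X 3), Polynomial.C (X 2), Polynomial.C (X 3)] i := by
  have hsucc (j : Fin 4) : finSuccEquiv K 4 (X j.succ) = Polynomial.C (X j) :=
    finSuccEquiv_X_succ
  fin_cases i <;> simp [quadraticCoords, shearSwap]
  · exact hsucc 1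
  · exact hsucc 0
  · rw [show (4 : Fin 5) = Fin.succ 3 from rfl, hsucc, finSuccEquiv_X_zero]
  · rw [show (3 : Fin 5) = Fin.succ 2 from rfl, hsucc]
  · rw [show (4 : Fin 5) = Fin.succ 3 from rfl, hsucc]

theorem quadraticCoords_C {K : Type*} [CommRing K] (r : K) :
    quadraticCoords K (C r) = Polynomial.C (C r) :=
  (quadraticCoords K).commutes r

theorem quadraticCoords_SpolySpec {K : Type} [Field K] (a : ℕ → K) (b : ℕ → ℕ → K)
    (hb : ∀ i j, j ≠ 0 → b i j = 0) (d : ℕ) :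
    quadraticCoords K (SpolySpec a b d) =
      Polynomial.C ((X 1 : MvPolynomial (Fin 4) K) ^ (d - 1)) * Polynomial.X ^ 2
      + Polynomial.C (-∑ i ∈ range (d + 1), C (a i) * (X 2 ^ i - X 0 ^ i) * X 1 ^ (d - i))
        * Polynomial.X
      + Polynomial.C (-((X 0 - X 2) *
          ∑ i ∈ range (d + 1), C (b i 0) * (X 2 ^ i - X 0 ^ i) * X 1 ^ (d - i))) := by
  have hsum (i : ℕ) : ∑ j ∈ range (d + 1), C (b i j) * (X 3 ^ i * X 4 ^ j - X 1 ^ i * X 2 ^ j)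
      * X 0 ^ (d - i - j) = (C (b i 0) * (X 3 ^ i - X 1 ^ i) * X 0 ^ (d - i) :
        MvPolynomial (Fin 5) K) := by
    rw [sum_eq_single_of_mem 0 (by simp) fun j _ hj => by rw [hb i j hj, C_0, zero_mul, zero_mul]]
    simp
  simp only [SpolySpec, hsum, map_sub, map_mul, map_pow, map_sum, map_neg,
    quadraticCoords_X, quadraticCoords_C]
  simp
  ring

theorem irreducible_SpolySpec {K : Type} [Field K] [CharP K 2] (a : ℕ → K) (b : ℕ → ℕ → K)
    {d d1 : ℕ} (hd : 2 ≤ d) (hdeg : 2 * d1 < d + 1) (ha : ∀ i, a i ≠ 0 → i ≤ d1)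
    (hb : ∀ i j, j ≠ 0 → b i j = 0) (hbd : b d 0 ≠ 0) :
    Irreducible (SpolySpec a b d) := by
  rw [← MulEquiv.irreducible_iff (quadraticCoords K), quadraticCoords_SpolySpec a b hb]
  refine X_prime.irreducible_quadratic (m := d - d1) (by omega) ?_
    (not_X_dvd_add_sq (j := 2) ?_)
  · refine dvd_neg.mpr (dvd_sum fun i _ => ?_)
    by_cases hai : a i = 0
    · simp [hai]
    · exact (pow_dvd_pow _ (by have := ha i hai; omega)).mul_left _
  · have hσ : aeval (Function.update X 1 0) (-((X 0 - X 2) * ∑ i ∈ range (d + 1),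
        C (b i 0) * (X 2 ^ i - X 0 ^ i) * X 1 ^ (d - i))) =
        -((X 0 - X 2) * (C (b d 0) * (X 2 ^ d - X 0 ^ d)) : MvPolynomial (Fin 4) K) := by
      rw [map_neg, map_mul, map_sum, sum_eq_single_of_mem d (self_mem_range_succ d)]
      · simp
      · intro i hi hid
        simp [zero_pow (show d - i ≠ 0 by simp at hi; omega)]
    rw [hσ]
    intro h0
    have := congrArg (eval (Pi.single 0 1)) h0
    simp [zero_pow (show d ≠ 0 by omega), zero_pow (show d - 1 ≠ 0 by omega), hbd] at this

theorem map_SpolySpec {K L : Type} [Field K] [Field L] (f : K →+* L) (a : ℕ → K)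
    (b : ℕ → ℕ → K) (d : ℕ) :
    map f (SpolySpec a b d) = SpolySpec (fun i => f (a i)) (fun i j => f (b i j)) d := by
  simp only [SpolySpec, map_sub, map_mul, map_pow, map_sum, map_C, map_X]

theorem totalDegree_ne_zero_of_irreducible_map {σ K L : Type*} [CommRing K] [Field L]
    (f : K →+* L) {g : MvPolynomial σ K} (h : Irreducible (map f g)) : g.totalDegree ≠ 0 := by
  intro h0
  rw [totalDegree_eq_zero_iff_eq_C.mp h0, map_C] at h
  exact h.not_isUnit ((Ne.isUnit fun hz => h.ne_zero (by rw [hz, C_0])).map C)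

theorem stmt_9_general
    (p : ℕ)
    (F : Type) [Field F] [CharP F p]
    (a : ℕ → F) (b : ℕ → ℕ → F)
    (d1 d2 d : ℕ)
    (hd1pos : 1 ≤ d1)
    (hd1ub : ∀ i, a i ≠ 0 → i ≤ d1)
    (hd2max : ∃ i j, i + j = d2 ∧ b i j ≠ 0)
    (hd : d = max d1 d2)
    (j2 : ℕ)
    (hj2ub : ∀ i j, b i j ≠ 0 → j ≤ j2)
    (hp2 : p = 2) (hdd : d1 < d2) (hj2v : j2 = 0)
    (hdeg : 2 * d1 < d2 + 1) :
    HasAbsIrredComp (SpolySpec a b d) := by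
  subst hp2 hj2v
  obtain rfl : d = d2 := by rw [hd, max_eq_right hdd.le]
  have hb : ∀ i j, j ≠ 0 → b i j = 0 := fun i j hj => by
    by_contra h; exact hj (Nat.le_zero.mp (hj2ub i j h))
  have hbd : b d 0 ≠ 0 := by
    obtain ⟨i, j, hij, hbij⟩ := hd2max
    obtain rfl : j = 0 := by by_contra hj; exact hbij (hb i j hj)
    rwa [← hij, add_zero]
  let ι := algebraMap F (AlgebraicClosure F)
  have : CharP (AlgebraicClosure F) 2 := charP_of_injective_algebraMap ι.injective 2
  have hirr : Irreducible (map ι (SpolySpec a b d)) := by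
    rw [map_SpolySpec]
    exact irreducible_SpolySpec _ _ (by omega) hdeg (fun i hi => hd1ub i (by simpa using hi))
      (fun i j hj => by simp [hb i j hj]) (by simpa using hbd)
  exact ⟨_, dvd_rfl, totalDegree_ne_zero_of_irreducible_map ι hirr, hirr⟩

theorem stmt_9
    (p ℓ : ℕ) (hp : p.Prime) (hℓ : 0 < ℓ)
    (F : Type) [Field F] [Fintype F] [CharP F p]
    (hcard : Fintype.card F = p ^ ℓ)
    (a : ℕ → F) (b : ℕ → ℕ → F)
    (ha0 : a 0 = 0) (hb00 : b 0 0 = 0) (hb01 : b 0 1 = 0)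
    (d1 d2 d : ℕ)
    (hd1pos : 1 ≤ d1)
    (hd1ub : ∀ i, a i ≠ 0 → i ≤ d1)
    (hd1max : d1 ≠ 1 → a d1 ≠ 0)
    (hd2ub : ∀ i j, b i j ≠ 0 → i + j ≤ d2)
    (hd2max : ∃ i j, i + j = d2 ∧ b i j ≠ 0)
    (hd : d = max d1 d2)
    (j2 : ℕ)
    (hj2ex : ∃ i, b i j2 ≠ 0) (hj2ub : ∀ i j, b i j ≠ 0 → j ≤ j2)
    (hp2 : p = 2) (hd1v : 1 < d1) (hdd : d1 < d2) (hj2v : j2 = 0)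
    (hdeg : 2 * d1 < d2 + 1) :
    HasAbsIrredComp (SpolySpec a b d) :=
  stmt_9_general p F a b d1 d2 d hd1pos hd1ub hd2max hd j2 hj2ub hp2 hdd hj2v hdeg
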